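/- Let G be an ε-free VW-CCG grammar with maximal rule degree d and maximal number of arguments γ among lexicon categories, and let τ be a derivation tree for a string w. Then every category labeling a node of τ has at most γ + d·(|w| − 1) arguments on its argument stack. -/

import Mathlib

/-- Categories of VW-CCG over atomic categories coded by natural numbers.
`slash d X Y` is `X /ᵈ Y` where `d = true` is a forward slash `/` and
`d = false` is a backward slash `\`. -/
inductive Cat : Type where
  | atom : ℕ → Cat
  | slash : Bool → Cat → Cat → Cat
deriving DecidableEq

namespace Cat

/-- The target (innermost atomic category). -/
def target : Cat → ℕ
  | atom a => a
  | slash _ X _ => X.target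

/-- The argument stack of a category, bottom of the stack first. -/
def args : Cat → List (Bool × Cat)
  | atom _ => []
  | slash d X Y => X.args ++ [(d, Y)]

/-- The number of arguments of a category. -/
def numArgs (X : Cat) : ℕ := X.args.length

/-- The size (number of symbols) of a category. -/
def size : Cat → ℕ
  | atom _ => 1
  | slash _ X Y => X.size + Y.size + 1

/-- `ArgOccurs p X` holds if the slash–category pair `p` occurs as an
argument somewhere inside the category `X`. -/
def ArgOccurs (p : Bool × Cat) : Cat → Prop
  | atom _ => False
  | slash d X Y => (d, Y) = p ∨ ArgOccurs p X ∨ ArgOccurs p Y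

end Cat

/-- Build `A /₁ X₁ ⋯ /ₘ Xₘ` from a target and an argument list. -/
def Cat.mk' (t : ℕ) (as : List (Bool × Cat)) : Cat :=
  as.foldl (fun c p => Cat.slash p.1 c p.2) (Cat.atom t)

/-- Push additional arguments on the stack of a category. -/
def appendArgs (X : Cat) (zs : List (Bool × Cat)) : Cat :=
  zs.foldl (fun c p => Cat.slash p.1 c p.2) X

/-- A VW-CCG combinatory rule: a (forward or backward) combinatory schema of
degree `zRestr.length`, optionally restricting the target of the variable `X`,
the category `Y`, and the slashes and categories of the arguments
`/₁ Z₁ ⋯ /_d Z_d` of the secondary input. -/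
structure Rule where
  fwd : Bool
  tRestr : Option ℕ
  yRestr : Option Cat
  zRestr : List (Bool × Option Cat)

/-- The degree of a rule. -/
def Rule.degree (r : Rule) : ℕ := r.zRestr.length

/-- `r.Inst L R O` holds if `L R ⇛ O` is a ground instance of the rule `r`:
forward: `X/Y  Y/₁Z₁⋯/_dZ_d ⇛ X/₁Z₁⋯/_dZ_d`;
backward: `Y/₁Z₁⋯/_dZ_d  X\Y ⇛ X/₁Z₁⋯/_dZ_d`, respecting the restrictions. -/
def Rule.Inst (r : Rule) (L R O : Cat) : Prop :=
  ∃ (X Y : Cat) (zs : List (Bool × Cat)),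
    (∀ t, r.tRestr = some t → X.target = t) ∧
    (∀ Y', r.yRestr = some Y' → Y = Y') ∧
    List.Forall₂ (fun (p : Bool × Option Cat) (z : Bool × Cat) =>
      z.1 = p.1 ∧ ∀ Z, p.2 = some Z → z.2 = Z) r.zRestr zs ∧
    O = appendArgs X zs ∧
    (if r.fwd then L = Cat.slash true X Y ∧ R = appendArgs Y zs
     else R = Cat.slash false X Y ∧ L = appendArgs Y zs)

/-- A VW-CCG grammar: a finite lexicon assigning categories to vocabulary
symbols (coded by naturals) or to the empty string (`none`), a finite set of
combinatory rules, and a distinguished atomic category. -/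
structure Grammar where
  lex : List (Option ℕ × Cat)
  rules : List Rule
  start : ℕ

/-- A grammar is ε-free if no lexicon entry is for the empty string. -/
def Grammar.EpsFree (G : Grammar) : Prop := ∀ e ∈ G.lex, e.1 ≠ none

/-- Derivation trees: leaves carry lexicon entries (`none` = empty string),
internal nodes carry categories and have exactly two children. -/
inductive DTree where
  | leaf : Option ℕ → Cat → DTree
  | node : Cat → DTree → DTree → DTree

namespace DTree

/-- The category at the root. -/
def top : DTree → Cat
  | leaf _ X => X
  | node X _ _ => X

/-- The yield: left-to-right concatenation of the symbols at the leaves. -/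
def yield : DTree → List ℕ
  | leaf none _ => []
  | leaf (some σ) _ => [σ]
  | node _ l r => l.yield ++ r.yield

/-- The total number of nodes. -/
def nodes : DTree → ℕ
  | leaf _ _ => 1
  | node _ l r => l.nodes + r.nodes + 1

/-- `τ.Valid G`: `τ` is a derivation tree of the grammar `G`. -/
def Valid (G : Grammar) : DTree → Prop
  | leaf σ X => (σ, X) ∈ G.lex
  | node X l r => Valid G l ∧ Valid G r ∧ ∃ rl ∈ G.rules, rl.Inst l.top r.top X

/-- `τ.CatAt C`: the category `C` labels some node of `τ`. -/
def CatAt : DTree → Cat → Prop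
  | leaf _ X, C => C = X
  | node X l r, C => C = X ∨ l.CatAt C ∨ r.CatAt C

end DTree

/-- The language generated by a grammar. -/
def Grammar.Lang (G : Grammar) : Set (List ℕ) :=
  { w | ∃ τ : DTree, τ.Valid G ∧ τ.top = Cat.atom G.start ∧ τ.yield = w }

/-!
A rule application of degree `e ≤ d` turns a primary input with `n + 1` arguments into a
category with `n + e` arguments, so its output has fewer than `d` more arguments than the larger
of its inputs. By induction, a derivation with `k` rule applications only carries categories
with at most `γ + d * k` arguments; and in an ε-free grammar every leaf yields one symbol, so a
derivation of `w` has exactly `|w| - 1` rule applications.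
-/

theorem Cat.numArgs_slash (s : Bool) (X Y : Cat) : (Cat.slash s X Y).numArgs = X.numArgs + 1 := by
  simp [Cat.numArgs, Cat.args]

theorem numArgs_appendArgs (X : Cat) (zs : List (Bool × Cat)) :
    (appendArgs X zs).numArgs = X.numArgs + zs.length := by
  induction zs generalizing X with
  | nil => rfl
  | cons z zs ih =>
    simp only [appendArgs, List.foldl_cons] at ih ⊢
    rw [ih, Cat.numArgs_slash, List.length_cons]
    omega

theorem Rule.Inst.numArgs_add_one_le {r : Rule} {L R O : Cat} (h : r.Inst L R O) :
    O.numArgs + 1 ≤ max L.numArgs R.numArgs + r.degree := by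
  obtain ⟨X, Y, zs, -, -, hzs, rfl, hLR⟩ := h
  have hdeg : r.degree = zs.length := hzs.length_eq
  rw [numArgs_appendArgs, hdeg]
  split_ifs at hLR <;>
  · obtain ⟨rfl, -⟩ := hLR
    rw [Cat.numArgs_slash]
    omega

namespace DTree

def ruleCount : DTree → ℕ
  | leaf _ _ => 0
  | node _ l r => l.ruleCount + r.ruleCount + 1

theorem catAt_top (τ : DTree) : τ.CatAt τ.top := by
  cases τ <;> simp [CatAt, top]

theorem ruleCount_add_one_eq_length_yield {G : Grammar} (hG : G.EpsFree) :
    ∀ {τ : DTree}, τ.Valid G → τ.ruleCount + 1 = τ.yield.length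
  | leaf none X, h => absurd rfl (hG (none, X) h)
  | leaf (some _) _, _ => rfl
  | node _ l r, ⟨hl, hr, _⟩ => by
    simp only [ruleCount, yield, List.length_append, ← ruleCount_add_one_eq_length_yield hG hl,
      ← ruleCount_add_one_eq_length_yield hG hr]
    omega

theorem numArgs_le_of_catAt {G : Grammar} {d γ : ℕ}
    (hd : ∀ r ∈ G.rules, r.degree ≤ d) (hγ : ∀ e ∈ G.lex, e.2.numArgs ≤ γ) :
    ∀ {τ : DTree}, τ.Valid G → ∀ {C : Cat}, τ.CatAt C → C.numArgs ≤ γ + d * τ.ruleCount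
  | leaf σ X, h, C, (hC : C = X) => by
    rw [hC]
    exact (hγ (σ, X) h).trans (Nat.le_add_right _ _)
  | node X l r, ⟨hl, hr, rl, hrl, hinst⟩, C, hC => by
    have hL := numArgs_le_of_catAt hd hγ hl (catAt_top l)
    have hR := numArgs_le_of_catAt hd hγ hr (catAt_top r)
    have hdl : d * l.ruleCount ≤ d * (l.ruleCount + r.ruleCount) := by gcongr; omega
    have hdr : d * r.ruleCount ≤ d * (l.ruleCount + r.ruleCount) := by gcongr; omega
    rw [ruleCount, mul_add_one]
    rcases hC with rfl | hC | hC
    · have := hinst.numArgs_add_one_le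
      have := hd rl hrl
      omega
    · have := numArgs_le_of_catAt hd hγ hl hC
      omega
    · have := numArgs_le_of_catAt hd hγ hr hC
      omega

end DTree

/-- In an ε-free VW-CCG grammar with maximal rule degree `d` and maximal
number of lexicon arguments `γ`, every category labeling a node of a
derivation tree for `w` has at most `γ + d·(|w| − 1)` arguments. -/
theorem numArgs_le (G : Grammar) (d γ : ℕ)
    (hd : ∀ r ∈ G.rules, r.degree ≤ d)
    (hγ : ∀ e ∈ G.lex, e.2.numArgs ≤ γ)
    (hG : G.EpsFree)
    (τ : DTree) (hτ : τ.Valid G) (w : List ℕ) (hw : τ.yield = w) :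
    ∀ C : Cat, τ.CatAt C → C.numArgs ≤ γ + d * (w.length - 1) := by
  intro C hC
  have hcount : τ.ruleCount = w.length - 1 := by
    rw [← hw, ← DTree.ruleCount_add_one_eq_length_yield hG hτ, Nat.add_sub_cancel]
  exact hcount ▸ DTree.numArgs_le_of_catAt hd hγ hτ hC
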